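/- arXiv:2004.03075 — 4 statements merged into one kernel-verified Lean document; each statement's English description precedes it below -/
import Mathlib

section
/- Let y(s) solve dy/ds = F_s(y) on the unit sphere with y(0) = y₀, and let r(s) = r₀ exp(∫₀^s F_r(y(s₁)) ds₁) and t(s) = ∫₀^s r(s₁)^{1-α} ds₁. Then x(s) := r(s) y(s), parametrized by t(s), solves dx/dt = |x|^α F(x/|x|) with x(0) = r₀ y₀, as long as r(s) > 0. -/
open Real intervalIntegral

/-- Reconstruction of solutions of the singular system from the spherical dynamics:
if `y(s)` solves `dy/ds = F_s(y)` on the unit sphere with `y 0 = y₀`, and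
`r(s) = r₀ exp(∫₀^s F_r(y))`, then `x(s) = r(s) • y(s)` solves
`dx/dt = ‖x‖^α F(x/‖x‖)` along the reparametrization `dt/ds = r(s)^{1-α}`,
with `x(0) = r₀ • y₀`. -/
theorem stmt_1 {d : ℕ} (α : ℝ) (hα : α < 1)
    (F Fs : EuclideanSpace ℝ (Fin d) → EuclideanSpace ℝ (Fin d))
    (Fr : EuclideanSpace ℝ (Fin d) → ℝ)
    (hdecomp : ∀ z : EuclideanSpace ℝ (Fin d), ‖z‖ = 1 → F z = Fs z + Fr z • z)
    (y : ℝ → EuclideanSpace ℝ (Fin d)) (y₀ : EuclideanSpace ℝ (Fin d))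
    (hy0 : y 0 = y₀)
    (hy : ∀ s : ℝ, HasDerivAt y (Fs (y s)) s)
    (hsphere : ∀ s : ℝ, ‖y s‖ = 1)
    (hcont : Continuous fun s : ℝ => Fr (y s))
    (r₀ : ℝ) (hr₀ : 0 < r₀)
    (r : ℝ → ℝ)
    (hr : ∀ s : ℝ, r s = r₀ * Real.exp (∫ s₁ in (0:ℝ)..s, Fr (y s₁))) :
    (r 0 • y 0 = r₀ • y₀) ∧
    ∀ s : ℝ, 0 < r s ∧
      HasDerivAt (fun s : ℝ => r s • y s)
        ((r s ^ (1 - α)) •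
          ((‖r s • y s‖ ^ α) • F (‖r s • y s‖⁻¹ • (r s • y s)))) s := by
  have hrpos : ∀ s, 0 < r s := by
    intro s; rw [hr]; positivity
  constructor
  · rw [hy0, hr 0, intervalIntegral.integral_same, Real.exp_zero, mul_one]
  intro s
  refine ⟨hrpos s, ?_⟩
  -- derivative of the integral
  have hI : HasDerivAt (fun s : ℝ => ∫ s₁ in (0:ℝ)..s, Fr (y s₁)) (Fr (y s)) s :=
    intervalIntegral.integral_hasDerivAt_right (hcont.intervalIntegrable 0 s)
      (hcont.stronglyMeasurableAtFilter _ _) hcont.continuousAt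
  have hr' : HasDerivAt r (r s * Fr (y s)) s := by
    have h1 : HasDerivAt (fun s : ℝ => r₀ * Real.exp (∫ s₁ in (0:ℝ)..s, Fr (y s₁)))
        (r₀ * (Real.exp (∫ s₁ in (0:ℝ)..s, Fr (y s₁)) * Fr (y s))) s :=
      (hI.exp).const_mul r₀
    have : r = fun s : ℝ => r₀ * Real.exp (∫ s₁ in (0:ℝ)..s, Fr (y s₁)) := funext hr
    rw [this]
    rw [mul_assoc]
    exact h1
  have hx : HasDerivAt (fun s : ℝ => r s • y s)
      (r s • Fs (y s) + (r s * Fr (y s)) • y s) s := hr'.smul (hy s)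
  convert hx using 1
  have hnorm : ‖r s • y s‖ = r s := by
    rw [norm_smul, hsphere s, Real.norm_eq_abs, abs_of_pos (hrpos s), mul_one]
  rw [hnorm, smul_smul (r s)⁻¹ (r s), inv_mul_cancel₀ (hrpos s).ne', one_smul,
    hdecomp (y s) (hsphere s), smul_smul, ← Real.rpow_add (hrpos s),
    sub_add_cancel, Real.rpow_one, smul_add, smul_smul]
end

section
/- The function G defined by G(y) = ∫₀^∞ exp((α−1) ∫₀^{s₁} F_r(Φ^{-s₂}(y)) ds₂) ds₁ is continuous on any compact flow-invariant set A on which F_r ≥ F_m > 0. -/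
open Real MeasureTheory intervalIntegral Set

/-!
Along every orbit in `A` the inner integral grows at least like `F_m s₁`, so the integrand of `G`
is dominated, uniformly on `A`, by the integrable function `exp ((α - 1) F_m s₁)`. The integrand
is jointly continuous in `(y, s₁)`, hence `G` is continuous on `A` by dominated convergence.
-/

theorem continuousOn_setIntegral_Ici_of_norm_le_exp {X E : Type*} [TopologicalSpace X]
    [FirstCountableTopology X] [NormedAddCommGroup E] [NormedSpace ℝ E] {g : X → ℝ → E}
    (hg : Continuous g.uncurry) {A : Set X} {c : ℝ} (hc : 0 < c)
    (hbound : ∀ x ∈ A, ∀ s, 0 ≤ s → ‖g x s‖ ≤ exp (-c * s)) :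
    ContinuousOn (fun x => ∫ s in Ici 0, g x s) A := by
  have hg_right (x : X) : Continuous (g x) := hg.comp (Continuous.prodMk_right x)
  refine continuousOn_of_dominated (bound := fun s => exp (-c * s))
    (fun x _ => (hg_right x).aestronglyMeasurable.restrict) (fun x hx => ?_)
    (Iff.mpr integrableOn_Ici_iff_integrableOn_Ioi (exp_neg_integrableOn_Ioi 0 hc))
    (Filter.Eventually.of_forall fun _ =>
      (hg.comp (continuous_id.prodMk continuous_const)).continuousOn)
  filter_upwards [ae_restrict_mem measurableSet_Ici] with s hs
  exact hbound x hx s hs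

theorem mul_sub_le_intervalIntegral_of_le {f : ℝ → ℝ} {a b c : ℝ} (hab : a ≤ b)
    (hf : IntervalIntegrable f volume a b) (hcf : ∀ u ∈ Icc a b, c ≤ f u) :
    c * (b - a) ≤ ∫ u in a..b, f u := by
  simpa [mul_comm] using integral_mono_on hab intervalIntegrable_const hf hcf

theorem stmt_7_general {d : ℕ} (α : ℝ) (hα : α < 1)
    (Φ : ℝ → EuclideanSpace ℝ (Fin d) → EuclideanSpace ℝ (Fin d))
    (hΦcont : Continuous fun p : ℝ × EuclideanSpace ℝ (Fin d) => Φ p.1 p.2)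
    (Fr : EuclideanSpace ℝ (Fin d) → ℝ) (hFr : Continuous Fr)
    (A : Set (EuclideanSpace ℝ (Fin d)))
    (hinv : ∀ s : ℝ, ∀ y ∈ A, Φ s y ∈ A)
    (Fm : ℝ) (hFm : 0 < Fm) (hlow : ∀ y ∈ A, Fm ≤ Fr y) :
    ContinuousOn
      (fun y => ∫ s₁ in Ici (0:ℝ),
        Real.exp ((α - 1) * ∫ s₂ in (0:ℝ)..s₁, Fr (Φ (-s₂) y)))
      A := by
  have hFr_orbit : Continuous fun p : EuclideanSpace ℝ (Fin d) × ℝ => Fr (Φ (-p.2) p.1) := by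
    fun_prop
  refine continuousOn_setIntegral_Ici_of_norm_le_exp (c := (1 - α) * Fm) ?_
    (mul_pos (by linarith) hFm) fun y hy s hs => ?_
  · exact continuous_exp.comp
      (continuous_const.mul (continuous_parametric_primitive_of_continuous
        (f := fun y s₂ => Fr (Φ (-s₂) y)) hFr_orbit))
  · have hgrowth : Fm * (s - 0) ≤ ∫ s₂ in (0:ℝ)..s, Fr (Φ (-s₂) y) :=
      mul_sub_le_intervalIntegral_of_le hs
        ((hFr_orbit.comp (Continuous.prodMk_right y)).intervalIntegrable 0 s)
        fun u _ => hlow _ (hinv (-u) y hy)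
    rw [norm_of_nonneg (exp_pos _).le, exp_le_exp]
    nlinarith

/-- Continuity of the graph function `G` on a compact invariant set `A` on which
`F_r ≥ F_m > 0`, where `G(y) = ∫₀^∞ exp((α−1)∫₀^{s₁} F_r(Φ^{-s₂} y) ds₂) ds₁`. -/
theorem stmt_7 {d : ℕ} (α : ℝ) (hα : α < 1)
    (Φ : ℝ → EuclideanSpace ℝ (Fin d) → EuclideanSpace ℝ (Fin d))
    (hΦcont : Continuous fun p : ℝ × EuclideanSpace ℝ (Fin d) => Φ p.1 p.2)
    (Fr : EuclideanSpace ℝ (Fin d) → ℝ) (hFr : Continuous Fr)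
    (A : Set (EuclideanSpace ℝ (Fin d))) (hA : IsCompact A)
    (hinv : ∀ s : ℝ, ∀ y ∈ A, Φ s y ∈ A)
    (Fm : ℝ) (hFm : 0 < Fm) (hlow : ∀ y ∈ A, Fm ≤ Fr y) :
    ContinuousOn
      (fun y => ∫ s₁ in Ici (0:ℝ),
        Real.exp ((α - 1) * ∫ s₂ in (0:ℝ)..s₁, Fr (Φ (-s₂) y)))
      A :=
  stmt_7_general α hα Φ hΦcont Fr hFr A hinv Fm hFm hlow
end

section
/- If y(s) = Φ^s(y₀) lies in a compact invariant set where F_r ≥ F_m > 0, and w₀ = G(y₀) with G(y) = ∫₀^∞ exp((α−1)∫₀^{s₁} F_r(Φ^{-s₂}(y)) ds₂) ds₁, then the solution of dw/ds = 1 + (α−1)F_r(y(s))w with w(0)=w₀ satisfies w(s) = G(y(s)) for all s ≥ 0; i.e., the graph w = G(y) is invariant. -/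
open Real MeasureTheory intervalIntegral Set

/-!
Along the orbit put `f u = F_r (Φ^u y₀)`. The flow property turns `G (Φ^s y₀)` into the tail
integral `∫_{-∞}^s exp ((α - 1) ∫_u^s f) du`, which converges because `f ≥ F_m > 0` and, written
with the integrating factor `exp ((α - 1) ∫_0^s f)`, solves the same linear equation
`w' = 1 + (α - 1) f w` as `w`. Both agree at `s = 0`, so they agree everywhere by uniqueness for
scalar linear ODEs.
-/

theorem hasDerivAt_setIntegral_Iic {E : Type*} [NormedAddCommGroup E] [NormedSpace ℝ E]
    [CompleteSpace E] {F : ℝ → E} (hF : Continuous F) (hint : ∀ s, IntegrableOn F (Iic s))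
    (s : ℝ) : HasDerivAt (fun t => ∫ u in Iic t, F u) (F s) s := by
  refine ((hF.integral_hasStrictDerivAt 0 s).hasDerivAt.const_add (∫ u in Iic 0, F u))
    |>.congr_of_eventuallyEq (Filter.Eventually.of_forall fun t => ?_)
  simp only [← integral_Iic_sub_Iic (hint 0) (hint t), add_sub_cancel]

theorem eq_of_hasDerivAt_add_mul {a b w₁ w₂ : ℝ → ℝ} (ha : Continuous a)
    (h₁ : ∀ t, HasDerivAt w₁ (b t + a t * w₁ t) t) (h₂ : ∀ t, HasDerivAt w₂ (b t + a t * w₂ t) t)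
    {t₀ : ℝ} (h₀ : w₁ t₀ = w₂ t₀) (t : ℝ) : w₁ t = w₂ t := by
  have hP : ∀ t, HasDerivAt (fun t => ∫ u in t₀..t, a u) (a t) t := fun t =>
    (ha.integral_hasStrictDerivAt t₀ t).hasDerivAt
  have hconst : ∀ t, HasDerivAt (fun t => (w₁ t - w₂ t) * exp (-∫ u in t₀..t, a u)) 0 t := by
    intro t
    refine (((h₁ t).sub (h₂ t)).mul (hP t).neg.exp).congr_deriv ?_
    simp only [Pi.neg_apply, Pi.sub_apply]
    ring
  have := is_const_of_deriv_eq_zero (fun t => (hconst t).differentiableAt)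
    (fun t => (hconst t).deriv) t t₀
  simpa [h₀, sub_eq_zero, (exp_pos _).ne'] using this

section ExpWeightedTail

variable {f : ℝ → ℝ} {a c : ℝ}

noncomputable def expWeightedTail (a : ℝ) (f : ℝ → ℝ) (s : ℝ) : ℝ :=
  ∫ u in Iic s, exp (a * ∫ v in u..s, f v)

theorem expWeightedTail_eq_integral_Ici (a : ℝ) (f : ℝ → ℝ) (s : ℝ) :
    expWeightedTail a f s = ∫ r in Ici (0 : ℝ), exp (a * ∫ v in (0 : ℝ)..r, f (s - v)) := by
  have hpre : (fun r : ℝ => s - r) ⁻¹' Iic s = Ici 0 := by ext r; simp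
  rw [expWeightedTail, ← (Measure.measurePreserving_sub_left volume s).setIntegral_preimage_emb
    (MeasurableEquiv.subLeft s).measurableEmbedding, hpre]
  simp only [integral_comp_sub_left, sub_zero]

theorem integrableOn_exp_neg_mul_primitive_Iic (hf : Continuous f) (ha : a < 0) (hc : 0 < c)
    (hcf : ∀ u, c ≤ f u) (s : ℝ) :
    IntegrableOn (fun u => exp (-a * ∫ v in (0 : ℝ)..u, f v)) (Iic s) := by
  have hH : Continuous fun u => ∫ v in (0 : ℝ)..u, f v :=
    continuous_primitive (fun _ _ => hf.intervalIntegrable _ _) 0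
  refine ((integrableOn_exp_mul_Iic (mul_pos (neg_pos.2 ha) hc) s).mul_const
    (exp (-a * ∫ v in (0 : ℝ)..s, f v) * exp (a * c * s))).mono'
    (by fun_prop : Continuous _).aestronglyMeasurable.restrict ?_
  rw [ae_restrict_iff' measurableSet_Iic]
  refine Filter.Eventually.of_forall fun u (hu : u ≤ s) => ?_
  have hlow : c * (s - u) ≤ ∫ v in u..s, f v := by
    simpa [mul_comm] using integral_mono_on (μ := volume) hu intervalIntegrable_const
      (hf.intervalIntegrable u s) fun v _ => hcf v
  rw [← integral_interval_sub_left (hf.intervalIntegrable 0 s) (hf.intervalIntegrable 0 u)] at hlow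
  rw [Real.norm_of_nonneg (exp_pos _).le, ← exp_add, ← exp_add, exp_le_exp]
  nlinarith

theorem expWeightedTail_eq_exp_mul (hf : Continuous f) (a s : ℝ) :
    expWeightedTail a f s = exp (a * ∫ v in (0 : ℝ)..s, f v) *
      ∫ u in Iic s, exp (-a * ∫ v in (0 : ℝ)..u, f v) := by
  rw [expWeightedTail, ← MeasureTheory.integral_const_mul]
  congr 1 with u
  rw [← exp_add, ← integral_interval_sub_left (hf.intervalIntegrable 0 s)
    (hf.intervalIntegrable 0 u)]
  ring_nf

theorem hasDerivAt_expWeightedTail (hf : Continuous f) (ha : a < 0) (hc : 0 < c)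
    (hcf : ∀ u, c ≤ f u) (s : ℝ) :
    HasDerivAt (expWeightedTail a f) (1 + a * f s * expWeightedTail a f s) s := by
  have hH : ∀ t, HasDerivAt (fun t => ∫ v in (0 : ℝ)..t, f v) (f t) t := fun t =>
    (hf.integral_hasStrictDerivAt 0 t).hasDerivAt
  have hI := hasDerivAt_setIntegral_Iic
    (continuous_primitive (fun _ _ => hf.intervalIntegrable _ _) 0 |>.const_mul (-a) |>.rexp)
    (integrableOn_exp_neg_mul_primitive_Iic hf ha hc hcf) s
  rw [funext (expWeightedTail_eq_exp_mul hf a)]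
  refine ((((hH s).const_mul a).exp).mul hI).congr_deriv ?_
  rw [← exp_add, neg_mul, add_neg_cancel, exp_zero]
  ring

end ExpWeightedTail

theorem stmt_9_general {d : ℕ} (α : ℝ) (hα : α < 1)
    (Φ : ℝ → EuclideanSpace ℝ (Fin d) → EuclideanSpace ℝ (Fin d))
    (hΦcont : Continuous fun p : ℝ × EuclideanSpace ℝ (Fin d) => Φ p.1 p.2)
    (hΦ0 : ∀ y, Φ 0 y = y)
    (hΦadd : ∀ s t : ℝ, ∀ y, Φ (s + t) y = Φ s (Φ t y))
    (Fr : EuclideanSpace ℝ (Fin d) → ℝ) (hFr : Continuous Fr)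
    (A : Set (EuclideanSpace ℝ (Fin d)))
    (hinv : ∀ s : ℝ, ∀ y ∈ A, Φ s y ∈ A)
    (Fm : ℝ) (hFm : 0 < Fm) (hlow : ∀ y ∈ A, Fm ≤ Fr y)
    (G : EuclideanSpace ℝ (Fin d) → ℝ)
    (hG : ∀ y ∈ A, G y = ∫ s₁ in Ici (0:ℝ),
        Real.exp ((α - 1) * ∫ s₂ in (0:ℝ)..s₁, Fr (Φ (-s₂) y)))
    (y₀ : EuclideanSpace ℝ (Fin d)) (hy₀ : y₀ ∈ A)
    (w : ℝ → ℝ) (hw0 : w 0 = G y₀)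
    (hw : ∀ s : ℝ, HasDerivAt w (1 + (α - 1) * Fr (Φ s y₀) * w s) s) :
    ∀ s : ℝ, 0 ≤ s → w s = G (Φ s y₀) := by
  set f : ℝ → ℝ := fun u => Fr (Φ u y₀)
  have hf : Continuous f := hFr.comp (hΦcont.comp (continuous_id.prodMk continuous_const))
  have hGf : ∀ s, G (Φ s y₀) = expWeightedTail (α - 1) f s := fun s => by
    simp only [hG _ (hinv s y₀ hy₀), expWeightedTail_eq_integral_Ici, f, ← hΦadd,
      neg_add_eq_sub]
  have hsol := hasDerivAt_expWeightedTail hf (sub_neg.2 hα) hFm fun u => hlow _ (hinv u y₀ hy₀)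
  intro s _
  rw [hGf]
  refine eq_of_hasDerivAt_add_mul (t₀ := 0) (by fun_prop : Continuous fun t => (α - 1) * f t)
    hw hsol ?_ s
  rw [hw0, ← hGf, hΦ0]

/-- Invariance of the synchronization graph `w = G(y)`: if `y₀` lies in a compact
invariant set where `F_r ≥ F_m > 0`, `G` is the convergent improper integral, and
`w` solves `dw/ds = 1 + (α−1)F_r(Φ^s y₀)w` with `w(0) = G(y₀)`, then
`w(s) = G(Φ^s y₀)` for all `s ≥ 0`. -/
theorem stmt_9 {d : ℕ} (α : ℝ) (hα : α < 1)
    (Φ : ℝ → EuclideanSpace ℝ (Fin d) → EuclideanSpace ℝ (Fin d))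
    (hΦcont : Continuous fun p : ℝ × EuclideanSpace ℝ (Fin d) => Φ p.1 p.2)
    (hΦ0 : ∀ y, Φ 0 y = y)
    (hΦadd : ∀ s t : ℝ, ∀ y, Φ (s + t) y = Φ s (Φ t y))
    (Fr : EuclideanSpace ℝ (Fin d) → ℝ) (hFr : Continuous Fr)
    (A : Set (EuclideanSpace ℝ (Fin d))) (hA : IsCompact A)
    (hinv : ∀ s : ℝ, ∀ y ∈ A, Φ s y ∈ A)
    (Fm : ℝ) (hFm : 0 < Fm) (hlow : ∀ y ∈ A, Fm ≤ Fr y)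
    (G : EuclideanSpace ℝ (Fin d) → ℝ)
    (hG : ∀ y ∈ A, G y = ∫ s₁ in Ici (0:ℝ),
        Real.exp ((α - 1) * ∫ s₂ in (0:ℝ)..s₁, Fr (Φ (-s₂) y)))
    (y₀ : EuclideanSpace ℝ (Fin d)) (hy₀ : y₀ ∈ A)
    (w : ℝ → ℝ) (hw0 : w 0 = G y₀)
    (hw : ∀ s : ℝ, HasDerivAt w (1 + (α - 1) * Fr (Φ s y₀) * w s) s) :
    ∀ s : ℝ, 0 ≤ s → w s = G (Φ s y₀) :=
  stmt_9_general α hα Φ hΦcont hΦ0 hΦadd Fr hFr A hinv Fm hFm hlow G hG y₀ hy₀ w hw0 hw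
end

section
/- The change of variables y(τ) = x(e^τ)/|x(e^τ)|, w(τ) = e^τ |x(e^τ)|^{α−1} transforms any nonvanishing solution x(t) (t > 0) of dx/dt = |x|^α(F_s(x/|x|) + F_r(x/|x|) x/|x|) into a solution of the autonomous system dy/dτ = w F_s(y), dw/dτ = w + (α−1) F_r(y) w². -/
/-!
Write `x = ‖x‖ u` with `‖u‖ = 1`. Since `F_s(u) ⟂ u`, the radial speed `⟪u, x'⟫` is
`‖x‖^α F_r(u)` and `u' = ‖x‖⁻¹ (x' - ⟪u, x'⟫ u) = ‖x‖^(α-1) F_s(u)`. In logarithmic time the chain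
rule contributes a factor `e^τ`, which turns `‖x‖^(α-1)` into `w`; differentiating
`w = e^τ ‖x‖^(α-1)` then gives `w + (α-1) F_r(u) w²`.
-/

open Real RealInnerProductSpace

section Polar

variable {E : Type*} [NormedAddCommGroup E] [InnerProductSpace ℝ E] {f : ℝ → E} {f' : E} {t : ℝ}

theorem HasDerivAt.norm_of_ne_zero (hf : HasDerivAt f f' t) (h0 : f t ≠ 0) :
    HasDerivAt (‖f ·‖) ⟪‖f t‖⁻¹ • f t, f'⟫ t := by
  have hn : ‖f t‖ ≠ 0 := norm_ne_zero_iff.2 h0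
  have h := hf.norm_sq.sqrt (pow_ne_zero 2 hn)
  simp only [sqrt_sq (norm_nonneg _)] at h
  refine h.congr_deriv ?_
  rw [real_inner_smul_left]
  field_simp

theorem HasDerivAt.inv_norm_smul (hf : HasDerivAt f f' t) (h0 : f t ≠ 0) :
    HasDerivAt (fun s => ‖f s‖⁻¹ • f s)
      (‖f t‖⁻¹ • (f' - ⟪‖f t‖⁻¹ • f t, f'⟫ • ‖f t‖⁻¹ • f t)) t := by
  have hn : ‖f t‖ ≠ 0 := norm_ne_zero_iff.2 h0
  refine (((hf.norm_of_ne_zero h0).inv hn).smul hf).congr_deriv ?_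
  rw [Pi.inv_apply, real_inner_smul_left]
  match_scalars <;> field_simp

theorem inner_unit_tangent_add_radial {u v : E} (hu : ‖u‖ = 1) (hv : ⟪v, u⟫ = 0) (r : ℝ) :
    ⟪u, v + r • u⟫ = r := by
  rw [inner_add_right, real_inner_comm, hv, real_inner_smul_right, real_inner_self_eq_norm_sq,
    hu]
  ring

theorem norm_inv_norm_smul_of_ne_zero {u : E} (hu : u ≠ 0) : ‖‖u‖⁻¹ • u‖ = 1 := by
  simpa using norm_smul_inv_norm (𝕜 := ℝ) hu

variable {v : E} {c r : ℝ}

theorem HasDerivAt.norm_of_tangent_add_radial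
    (hf : HasDerivAt f (c • (v + r • ‖f t‖⁻¹ • f t)) t) (h0 : f t ≠ 0)
    (hv : ⟪v, ‖f t‖⁻¹ • f t⟫ = 0) :
    HasDerivAt (‖f ·‖) (c * r) t := by
  refine (hf.norm_of_ne_zero h0).congr_deriv ?_
  rw [real_inner_smul_right, inner_unit_tangent_add_radial (norm_inv_norm_smul_of_ne_zero h0) hv]

theorem HasDerivAt.inv_norm_smul_of_tangent_add_radial
    (hf : HasDerivAt f (c • (v + r • ‖f t‖⁻¹ • f t)) t) (h0 : f t ≠ 0)
    (hv : ⟪v, ‖f t‖⁻¹ • f t⟫ = 0) :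
    HasDerivAt (fun s => ‖f s‖⁻¹ • f s) ((c / ‖f t‖) • v) t := by
  refine (hf.inv_norm_smul h0).congr_deriv ?_
  rw [real_inner_smul_right, inner_unit_tangent_add_radial (norm_inv_norm_smul_of_ne_zero h0) hv]
  module

end Polar

theorem stmt_13_general {d : ℕ} (α : ℝ)
    (Fs : EuclideanSpace ℝ (Fin d) → EuclideanSpace ℝ (Fin d))
    (Fr : EuclideanSpace ℝ (Fin d) → ℝ)
    (htan : ∀ z : EuclideanSpace ℝ (Fin d), ‖z‖ = 1 → inner ℝ (Fs z) z = (0:ℝ))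
    (x : ℝ → EuclideanSpace ℝ (Fin d))
    (hne : ∀ t : ℝ, 0 < t → x t ≠ 0)
    (hx : ∀ t : ℝ, 0 < t →
      HasDerivAt x
        ((‖x t‖ ^ α) •
          (Fs (‖x t‖⁻¹ • x t) + Fr (‖x t‖⁻¹ • x t) • (‖x t‖⁻¹ • x t))) t) :
    ∀ τ : ℝ,
      HasDerivAt (fun τ : ℝ => ‖x (Real.exp τ)‖⁻¹ • x (Real.exp τ))
        ((Real.exp τ * ‖x (Real.exp τ)‖ ^ (α - 1)) •
          Fs (‖x (Real.exp τ)‖⁻¹ • x (Real.exp τ))) τ ∧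
      HasDerivAt (fun τ : ℝ => Real.exp τ * ‖x (Real.exp τ)‖ ^ (α - 1))
        (Real.exp τ * ‖x (Real.exp τ)‖ ^ (α - 1)
          + (α - 1) * Fr (‖x (Real.exp τ)‖⁻¹ • x (Real.exp τ))
            * (Real.exp τ * ‖x (Real.exp τ)‖ ^ (α - 1)) ^ 2) τ := by
  intro τ
  have h0 : x (exp τ) ≠ 0 := hne _ (exp_pos τ)
  have hn : ‖x (exp τ)‖ ≠ 0 := norm_ne_zero_iff.2 h0
  have hv := htan _ (norm_inv_norm_smul_of_ne_zero h0)
  have hlog : HasDerivAt (fun σ => x (exp σ)) ((exp τ * ‖x (exp τ)‖ ^ α) •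
      (Fs (‖x (exp τ)‖⁻¹ • x (exp τ)) +
        Fr (‖x (exp τ)‖⁻¹ • x (exp τ)) • ‖x (exp τ)‖⁻¹ • x (exp τ))) τ := by
    rw [mul_smul]
    exact (hx _ (exp_pos τ)).scomp τ (hasDerivAt_exp τ)
  constructor
  · refine (hlog.inv_norm_smul_of_tangent_add_radial h0 hv).congr_deriv ?_
    rw [rpow_sub_one hn, mul_div_assoc]
  · have hnorm := hlog.norm_of_tangent_add_radial h0 hv
    refine ((hasDerivAt_exp τ).mul (hnorm.rpow_const (p := α - 1) (Or.inl hn))).congr_deriv ?_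
    rw [rpow_sub_one hn, rpow_sub_one hn, rpow_sub_one hn]
    field_simp

/-- Logarithmic-time change of variables: `y(τ) = x(e^τ)/‖x(e^τ)‖`,
`w(τ) = e^τ ‖x(e^τ)‖^{α−1}` transforms any nonvanishing solution of
`dx/dt = ‖x‖^α (F_s(x/‖x‖) + F_r(x/‖x‖)·x/‖x‖)` into a solution of
`dy/dτ = w F_s(y)`, `dw/dτ = w + (α−1)F_r(y)w²`. -/
theorem stmt_13 {d : ℕ} (α : ℝ) (hα : α < 1)
    (Fs : EuclideanSpace ℝ (Fin d) → EuclideanSpace ℝ (Fin d))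
    (Fr : EuclideanSpace ℝ (Fin d) → ℝ)
    (htan : ∀ z : EuclideanSpace ℝ (Fin d), ‖z‖ = 1 → inner ℝ (Fs z) z = (0:ℝ))
    (x : ℝ → EuclideanSpace ℝ (Fin d))
    (hne : ∀ t : ℝ, 0 < t → x t ≠ 0)
    (hx : ∀ t : ℝ, 0 < t →
      HasDerivAt x
        ((‖x t‖ ^ α) •
          (Fs (‖x t‖⁻¹ • x t) + Fr (‖x t‖⁻¹ • x t) • (‖x t‖⁻¹ • x t))) t) :
    ∀ τ : ℝ,
      HasDerivAt (fun τ : ℝ => ‖x (Real.exp τ)‖⁻¹ • x (Real.exp τ))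
        ((Real.exp τ * ‖x (Real.exp τ)‖ ^ (α - 1)) •
          Fs (‖x (Real.exp τ)‖⁻¹ • x (Real.exp τ))) τ ∧
      HasDerivAt (fun τ : ℝ => Real.exp τ * ‖x (Real.exp τ)‖ ^ (α - 1))
        (Real.exp τ * ‖x (Real.exp τ)‖ ^ (α - 1)
          + (α - 1) * Fr (‖x (Real.exp τ)‖⁻¹ • x (Real.exp τ))
            * (Real.exp τ * ‖x (Real.exp τ)‖ ^ (α - 1)) ^ 2) τ :=
  stmt_13_general α Fs Fr htan x hne hx
end
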